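/- Let $E$ and $F$ be Banach lattices with $E$ having a quasi-interior point. Then $T:E\to F$ is un-bounded (maps un-topology-bounded sets to un-topology-bounded sets) if and only if $T$ is $\sigma$-unbounded norm continuous. -/

import Mathlib

open Filter Topology

section Defs
variable {α : Type*} [Lattice α] [AddCommGroup α]

/-- Order convergence to zero of a net, witnessed by a decreasing dominating net. -/
def OConvZero {ι : Type*} [Preorder ι] (x : ι → α) : Prop :=
  ∃ (κ : Type) (_ : Nonempty κ) (_ : Preorder κ) (_ : IsDirected κ (· ≤ ·)) (z : κ → α),
    Antitone z ∧ IsGLB (Set.range z) 0 ∧ ∀ β : κ, ∃ α₀, ∀ a ≥ α₀, |x a| ≤ z β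

/-- Unbounded order convergence to zero of a net. -/
def UOConvZero {ι : Type*} [Preorder ι] (x : ι → α) : Prop :=
  ∀ u : α, 0 ≤ u → OConvZero (fun a => |x a| ⊓ u)

end Defs

/-- Unbounded norm convergence to zero of a net in a normed lattice. -/
def UNConvZero {α : Type*} [NormedAddCommGroup α] [Lattice α] {ι : Type*} [Preorder ι]
    (x : ι → α) : Prop :=
  ∀ u : α, 0 ≤ u → Tendsto (fun a => ‖|x a| ⊓ u‖) atTop (𝓝 0)

/-- The neighborhood filter of x in the un-topology, with basic neighborhoods
{y : ‖|y - x| ⊓ u‖ < ε}. -/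
def unNhds {E : Type*} [NormedAddCommGroup E] [Lattice E] [IsOrderedAddMonoid E] [HasSolidNorm E] (x : E) : Filter E :=
  ⨅ (u : E) (_ : 0 ≤ u) (ε : ℝ) (_ : 0 < ε), 𝓟 {y | ‖|y - x| ⊓ u‖ < ε}

/-- A set is un-compact if it is compact in the un-topology (filter formulation). -/
def UnCompact {E : Type*} [NormedAddCommGroup E] [Lattice E] [IsOrderedAddMonoid E] [HasSolidNorm E] (A : Set E) : Prop :=
  ∀ l : Filter E, l.NeBot → l ≤ Filter.principal A → ∃ x ∈ A, (unNhds x ⊓ l).NeBot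

/-- A set is un-bounded (topologically bounded in the un-topology):
for every sequence in A and scalars αₙ → 0, αₙxₙ is un-null. -/
def UnBounded {E : Type*} [NormedAddCommGroup E] [Lattice E] [IsOrderedAddMonoid E] [HasSolidNorm E] [Module ℝ E] (A : Set E) : Prop :=
  ∀ x : ℕ → E, (∀ n, x n ∈ A) → ∀ a : ℕ → ℝ, Tendsto a atTop (𝓝 0) →
    UNConvZero (fun n => a n • x n)

def UnContinuous {E F : Type*} [NormedAddCommGroup E] [Lattice E] [IsOrderedAddMonoid E] [HasSolidNorm E] [Module ℝ E]
    [NormedAddCommGroup F] [Lattice F] [IsOrderedAddMonoid F] [HasSolidNorm F] [Module ℝ F] (T : E →ₗ[ℝ] F) : Prop :=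
  ∀ (ι : Type) (_ : Nonempty ι) (_ : Preorder ι) (_ : IsDirected ι (· ≤ ·))
    (x : ι → E), UNConvZero x → UNConvZero (fun a => T (x a))

def SigmaUnContinuous {E F : Type*} [NormedAddCommGroup E] [Lattice E] [IsOrderedAddMonoid E] [HasSolidNorm E] [Module ℝ E]
    [NormedAddCommGroup F] [Lattice F] [IsOrderedAddMonoid F] [HasSolidNorm F] [Module ℝ F] (T : E →ₗ[ℝ] F) : Prop :=
  ∀ x : ℕ → E, UNConvZero x → UNConvZero (fun n => T (x n))

/-!
With a quasi-interior point `e`, un-convergence to zero is controlled by the single quantity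
`‖|x| ⊓ e‖`, since every `u ≥ 0` is a norm limit of `u ⊓ n • e`. Hence an un-null sequence `x n`
can be multiplied by scalars `α n → ∞` so that `α n • x n` is still un-null, and like any un-null
sequence it has an un-bounded range. If `T` preserves un-bounded sets, multiplying
`T (α n • x n)` by `(α n)⁻¹ → 0` then shows that `T (x n)` is un-null. The converse holds in any
normed lattice: `a n • x n` is un-null for `x n` in an un-bounded set and `a n → 0`.
-/

section OrderedModule

variable {E : Type*} [Lattice E] [AddCommGroup E] [IsOrderedAddMonoid E] [Module ℝ E]

/- The positive cone is closed and contains the dyadic multiples `(k / 2 ^ m) • x` of each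
`x ≥ 0` (halving is possible since `0 ≤ 2 • y → 0 ≤ y` in a lattice-ordered group); these
approximate every `c • x` with `c ≥ 0`. -/
instance posSMulMono_of_orderClosedTopology [TopologicalSpace E] [OrderClosedTopology E]
    [ContinuousSMul ℝ E] : PosSMulMono ℝ E :=
  PosSMulMono.of_smul_nonneg fun c hc x hx => by
    have dyadic : ∀ m : ℕ, 0 ≤ ((2 : ℝ) ^ m)⁻¹ • x := by
      intro m
      induction m with
      | zero => simpa using hx
      | succ m ih =>
        refine nsmul_two_semiclosed ?_
        rw [← Nat.cast_smul_eq_nsmul ℝ, smul_smul]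
        convert ih using 2
        push_cast
        ring
    have approx : Tendsto (fun m : ℕ => (⌊c * 2 ^ m⌋₊ : ℝ) / 2 ^ m) atTop (𝓝 c) :=
      (tendsto_nat_floor_mul_div_atTop hc).comp (tendsto_pow_atTop_atTop_of_one_lt one_lt_two)
    refine isClosed_Ici.mem_of_tendsto (approx.smul_const x) (Eventually.of_forall fun m => ?_)
    rw [Set.mem_Ici, div_eq_mul_inv, mul_smul, Nat.cast_smul_eq_nsmul]
    exact nsmul_nonneg (dyadic m) _

variable [PosSMulMono ℝ E]

omit [IsOrderedAddMonoid E] in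
theorem abs_smul_le_smul_abs (c : ℝ) (x : E) : |c • x| ≤ |c| • |x| := by
  rcases le_total 0 c with hc | hc
  · rw [abs_of_nonneg hc]
    refine abs_le'.2 ⟨smul_le_smul_of_nonneg_left (le_abs_self x) hc, ?_⟩
    rw [← smul_neg]
    exact smul_le_smul_of_nonneg_left (neg_le_abs x) hc
  · rw [abs_of_nonpos hc]
    refine abs_le'.2 ⟨?_, ?_⟩
    · rw [← neg_smul_neg]
      exact smul_le_smul_of_nonneg_left (neg_le_abs x) (neg_nonneg.2 hc)
    · rw [← neg_smul]
      exact smul_le_smul_of_nonneg_left (le_abs_self x) (neg_nonneg.2 hc)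

theorem smul_inf_le_smul_inf {c : ℝ} (hc : 1 ≤ c) (a : E) {b : E} (hb : 0 ≤ b) :
    c • a ⊓ b ≤ c • (a ⊓ b) := by
  have hc₀ : 0 < c := zero_lt_one.trans_le hc
  rw [show c • (a ⊓ b) = c • a ⊓ c • b from (OrderIso.smulRight hc₀).map_inf a b]
  exact inf_le_inf_left _ (le_smul_of_one_le_left hb hc)

end OrderedModule

theorem inf_le_inf_add_sub_inf {α : Type*} [Lattice α] [AddCommGroup α] [IsOrderedAddMonoid α]
    (a u v : α) : a ⊓ u ≤ a ⊓ v + (u - u ⊓ v) := by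
  rw [← sub_le_iff_le_add]
  refine le_inf ((sub_le_self _ (sub_nonneg.2 inf_le_left)).trans inf_le_left) ?_
  calc a ⊓ u - (u - u ⊓ v) ≤ u - (u - u ⊓ v) := sub_le_sub_right inf_le_right _
    _ = u ⊓ v := sub_sub_cancel _ _
    _ ≤ v := inf_le_right

theorem norm_le_norm_of_nonneg_of_le {E : Type*} [NormedAddCommGroup E] [Lattice E]
    [IsOrderedAddMonoid E] [HasSolidNorm E] {x y : E} (hx : 0 ≤ x) (hxy : x ≤ y) : ‖x‖ ≤ ‖y‖ :=
  norm_le_norm_of_abs_le_abs <| by rwa [abs_of_nonneg hx, abs_of_nonneg (hx.trans hxy)]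

theorem exists_tendsto_atTop_mul_tendsto_zero {t : ℕ → ℝ} (ht : Tendsto t atTop (𝓝 0))
    (ht0 : ∀ n, 0 ≤ t n) :
    ∃ α : ℕ → ℝ, (∀ n, 1 ≤ α n) ∧ Tendsto α atTop atTop ∧
      Tendsto (fun n => α n * t n) atTop (𝓝 0) := by
  set s : ℕ → ℝ := fun n => t n + ((n : ℝ) + 1)⁻¹
  have hs_pos : ∀ n, 0 < s n := fun n => add_pos_of_nonneg_of_pos (ht0 n) (by positivity)
  have hs : Tendsto s atTop (𝓝 0) := by
    simpa [s] using ht.add tendsto_one_div_add_atTop_nhds_zero_nat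
  have hsqrt : Tendsto (fun n => √(s n)) atTop (𝓝[>] 0) :=
    tendsto_nhdsWithin_iff.2 ⟨by simpa using hs.sqrt, Eventually.of_forall fun n => by
      simpa using hs_pos n⟩
  refine ⟨fun n => max 1 (√(s n))⁻¹, fun n => le_max_left _ _,
    tendsto_atTop_mono (fun n => le_max_right _ _) (tendsto_inv_nhdsGT_zero.comp hsqrt), ?_⟩
  have bound : ∀ n, max 1 (√(s n))⁻¹ * t n ≤ max (t n) √(s n) := fun n => by
    rw [max_mul_of_nonneg _ _ (ht0 n), one_mul]
    refine max_le_max le_rfl ?_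
    calc (√(s n))⁻¹ * t n ≤ (√(s n))⁻¹ * s n := by
          gcongr
          simp only [s, le_add_iff_nonneg_right]
          positivity
      _ = √(s n) := by rw [inv_mul_eq_div, Real.div_sqrt]
  exact squeeze_zero (fun n => mul_nonneg (zero_le_one.trans (le_max_left _ _)) (ht0 n)) bound
    (by simpa using ht.max hs.sqrt)

section UnConvergence

variable {E : Type*} [NormedAddCommGroup E] [Lattice E] [IsOrderedAddMonoid E] [HasSolidNorm E]
  [NormedSpace ℝ E]

theorem norm_inf_le_mul_norm_inf_add_norm_sub_inf {a e u : E} (ha : 0 ≤ a) (he : 0 ≤ e)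
    (hu : 0 ≤ u) {c : ℝ} (hc : 1 ≤ c) :
    ‖a ⊓ u‖ ≤ c * ‖a ⊓ e‖ + ‖u - u ⊓ c • e‖ := by
  have hc₀ : 0 ≤ c := zero_le_one.trans hc
  have hce : a ⊓ c • e ≤ c • (a ⊓ e) := by
    simpa only [inf_comm a] using smul_inf_le_smul_inf hc e ha
  calc ‖a ⊓ u‖ ≤ ‖a ⊓ c • e + (u - u ⊓ c • e)‖ :=
        norm_le_norm_of_nonneg_of_le (le_inf ha hu) (inf_le_inf_add_sub_inf a u _)
    _ ≤ ‖a ⊓ c • e‖ + ‖u - u ⊓ c • e‖ := norm_add_le _ _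
    _ ≤ ‖c • (a ⊓ e)‖ + ‖u - u ⊓ c • e‖ := by
        gcongr
        exact norm_le_norm_of_nonneg_of_le (le_inf ha (smul_nonneg hc₀ he)) hce
    _ = c * ‖a ⊓ e‖ + ‖u - u ⊓ c • e‖ := by rw [norm_smul, Real.norm_of_nonneg hc₀]

theorem unConvZero_of_tendsto_norm_abs_inf {e : E} (he : 0 ≤ e)
    (hqi : ∀ x : E, 0 ≤ x → Tendsto (fun n : ℕ => x ⊓ n • e) atTop (𝓝 x))
    {ι : Type*} [Preorder ι] {x : ι → E} (hx : Tendsto (fun i => ‖|x i| ⊓ e‖) atTop (𝓝 0)) :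
    UNConvZero x := by
  intro u hu
  refine NormedAddGroup.tendsto_nhds_zero.2 fun ε hε => ?_
  have hu_approx : Tendsto (fun k : ℕ => ‖u - u ⊓ k • e‖) atTop (𝓝 0) := by
    simpa only [norm_sub_rev] using tendsto_iff_norm_sub_tendsto_zero.1 (hqi u hu)
  obtain ⟨k, hk, hk1⟩ :=
    ((hu_approx.eventually_lt_const (half_pos hε)).and (eventually_ge_atTop 1)).exists
  have hkx : Tendsto (fun i => (k : ℝ) * ‖|x i| ⊓ e‖) atTop (𝓝 0) := by
    simpa using hx.const_mul (k : ℝ)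
  filter_upwards [hkx.eventually_lt_const (half_pos hε)] with i hi
  have := norm_inf_le_mul_norm_inf_add_norm_sub_inf (abs_nonneg (x i)) he hu
    (Nat.one_le_cast.2 hk1)
  rw [Nat.cast_smul_eq_nsmul] at this
  rw [norm_norm]
  linarith

theorem UNConvZero.unBounded_range {z : ℕ → E} (hz : UNConvZero z) : UnBounded (Set.range z) := by
  intro y hy a ha u hu
  choose φ hφ using hy
  refine NormedAddGroup.tendsto_nhds_zero.2 fun ε hε => ?_
  obtain ⟨N, hN⟩ := eventually_atTop.1 ((hz u hu).eventually_lt_const hε)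
  obtain ⟨M, hM⟩ : ∃ M, ∀ k < N, ‖z k‖ ≤ M :=
    ⟨∑ k ∈ Finset.range N, ‖z k‖, fun k hk =>
      Finset.single_le_sum (fun i _ => norm_nonneg (z i)) (Finset.mem_range.2 hk)⟩
  have ha_abs : Tendsto (fun n => |a n|) atTop (𝓝 0) := by simpa using ha.abs
  have ha_M : Tendsto (fun n => |a n| * M) atTop (𝓝 0) := by simpa using ha_abs.mul_const M
  filter_upwards [ha_abs.eventually_le_const zero_lt_one, ha_M.eventually_lt_const hε]
    with n ha_one ha_small
  rw [norm_norm, ← hφ n]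
  by_cases hn : N ≤ φ n
  · have hle : |a n • z (φ n)| ≤ |z (φ n)| :=
      (abs_smul_le_smul_abs _ _).trans (smul_le_of_le_one_left (abs_nonneg _) ha_one)
    calc ‖|a n • z (φ n)| ⊓ u‖ ≤ ‖|z (φ n)| ⊓ u‖ :=
          norm_le_norm_of_nonneg_of_le (le_inf (abs_nonneg _) hu) (inf_le_inf_right u hle)
      _ < ε := hN _ hn
  · calc ‖|a n • z (φ n)| ⊓ u‖ ≤ ‖|a n • z (φ n)|‖ :=
          norm_le_norm_of_nonneg_of_le (le_inf (abs_nonneg _) hu) inf_le_left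
      _ = |a n| * ‖z (φ n)‖ := by rw [norm_abs_eq_norm, norm_smul, Real.norm_eq_abs]
      _ ≤ |a n| * M := by gcongr; exact hM _ (not_le.1 hn)
      _ < ε := ha_small

theorem UNConvZero.exists_smul_of_quasiInterior {e : E} (he : 0 ≤ e)
    (hqi : ∀ x : E, 0 ≤ x → Tendsto (fun n : ℕ => x ⊓ n • e) atTop (𝓝 x))
    {x : ℕ → E} (hx : UNConvZero x) :
    ∃ α : ℕ → ℝ, (∀ n, 1 ≤ α n) ∧ Tendsto α atTop atTop ∧ UNConvZero (fun n => α n • x n) := by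
  obtain ⟨α, hα1, hα, hαx⟩ :=
    exists_tendsto_atTop_mul_tendsto_zero (hx e he) (fun n => norm_nonneg _)
  refine ⟨α, hα1, hα, unConvZero_of_tendsto_norm_abs_inf he hqi
    (squeeze_zero (fun n => norm_nonneg _) (fun n => ?_) hαx)⟩
  have hα₀ : 0 ≤ α n := zero_le_one.trans (hα1 n)
  have hle : |α n • x n| ⊓ e ≤ α n • (|x n| ⊓ e) := by
    refine (inf_le_inf_right e (abs_smul_le_smul_abs _ _)).trans ?_
    rw [abs_of_nonneg hα₀]
    exact smul_inf_le_smul_inf (hα1 n) _ he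
  calc ‖|α n • x n| ⊓ e‖ ≤ ‖α n • (|x n| ⊓ e)‖ :=
        norm_le_norm_of_nonneg_of_le (le_inf (abs_nonneg _) he) hle
    _ = α n * ‖|x n| ⊓ e‖ := by rw [norm_smul, Real.norm_of_nonneg hα₀]

end UnConvergence

section Operators

variable {E F : Type*} [NormedAddCommGroup E] [Lattice E] [IsOrderedAddMonoid E] [HasSolidNorm E]
  [NormedAddCommGroup F] [Lattice F] [IsOrderedAddMonoid F] [HasSolidNorm F]

theorem SigmaUnContinuous.unBounded_image [Module ℝ E] [Module ℝ F] {T : E →ₗ[ℝ] F}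
    (hT : SigmaUnContinuous T) {A : Set E} (hA : UnBounded A) : UnBounded (T '' A) := by
  intro y hy a ha
  choose x hxA hxy using hy
  simpa only [← hxy, map_smul] using hT _ (hA x hxA a ha)

theorem sigmaUnContinuous_of_unBounded_image [NormedSpace ℝ E] [Module ℝ F] {e : E} (he : 0 ≤ e)
    (hqi : ∀ x : E, 0 ≤ x → Tendsto (fun n : ℕ => x ⊓ n • e) atTop (𝓝 x)) {T : E →ₗ[ℝ] F}
    (hT : ∀ A : Set E, UnBounded A → UnBounded (T '' A)) : SigmaUnContinuous T := by
  intro x hx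
  obtain ⟨α, hα1, hα, hαx⟩ := hx.exists_smul_of_quasiInterior he hqi
  have hTαx := hT _ hαx.unBounded_range (fun n => T (α n • x n)) (fun n => ⟨_, ⟨n, rfl⟩, rfl⟩)
    (fun n => (α n)⁻¹) (tendsto_inv_atTop_zero.comp hα)
  have hα₀ : ∀ n, α n ≠ 0 := fun n => (zero_lt_one.trans_le (hα1 n)).ne'
  simpa only [map_smul, inv_smul_smul₀ (hα₀ _)] using hTαx

end Operators

theorem unBounded_iff_sigmaUnContinuous_general
    {E F : Type*} [NormedAddCommGroup E] [Lattice E] [IsOrderedAddMonoid E] [HasSolidNorm E] [NormedSpace ℝ E]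
    [NormedAddCommGroup F] [Lattice F] [IsOrderedAddMonoid F] [HasSolidNorm F] [NormedSpace ℝ F]
    (e : E) (he : 0 ≤ e)
    (hqi : ∀ x : E, 0 ≤ x → Tendsto (fun n : ℕ => x ⊓ n • e) atTop (𝓝 x))
    (T : E →ₗ[ℝ] F) :
    (∀ A : Set E, UnBounded A → UnBounded (T '' A)) ↔ SigmaUnContinuous T :=
  ⟨sigmaUnContinuous_of_unBounded_image he hqi, fun hT _ hA => hT.unBounded_image hA⟩

/-- if E has a quasi-interior point, an operator between Banach
lattices is un-bounded iff it is σ-un-continuous. -/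
theorem unBounded_iff_sigmaUnContinuous
    {E F : Type*} [NormedAddCommGroup E] [Lattice E] [IsOrderedAddMonoid E] [HasSolidNorm E] [NormedSpace ℝ E] [CompleteSpace E]
    [NormedAddCommGroup F] [Lattice F] [IsOrderedAddMonoid F] [HasSolidNorm F] [NormedSpace ℝ F] [CompleteSpace F]
    (e : E) (he : 0 ≤ e)
    (hqi : ∀ x : E, 0 ≤ x → Tendsto (fun n : ℕ => x ⊓ n • e) atTop (𝓝 x))
    (T : E →ₗ[ℝ] F) :
    (∀ A : Set E, UnBounded A → UnBounded (T '' A)) ↔ SigmaUnContinuous T :=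
  unBounded_iff_sigmaUnContinuous_general e he hqi T
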